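/- arXiv:1012.0348 — 4 statements merged into one kernel-verified Lean document; each statement's English description precedes it below -/
import Mathlib

section
/- Let r > 0, q > 0 and 0 < X₁ < X₂ ≤ X₃ < X₄ with −X₄ + X₃ + X₂ − X₁ > 0 and r(X₃ + X₂ − X₁) ≥ qX₄. Define f(S) = 0 for S < X₁; f(S) = qS − rX₁ for X₁ < S < X₂; f(S) = r(X₂ − X₁) for X₂ ≤ S ≤ X₃ (interior values); f(S) = r(X₃ + X₂ − X₁) − qS for X₃ < S < X₄; f(S) = r(−X₄ + X₃ + X₂ − X₁) for S > X₄ (with the stated averaged values at the breakpoints S ∈ {X₁, X₂, X₃, X₄}). Then the boundary in (0,∞) of {S : f(S) > 0} is the singleton {min(max(X₁, (r/q)·X₁), X₂)}. -/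
/-!
Let `c = (r/q)·X₁` be the zero of the ramp `qS − rX₁` and `b = min (max X₁ c) X₂`. The two case
conditions make the plateau, the descending leg and the tail of `f` positive, so `f > 0` on
`(X₂, ∞)`; on the ramp `f > 0` exactly when `S > c`; and `f ≤ 0` below `X₁`. Hence the positivity
set lies between `(b, ∞)` and `[b, ∞)`, so its frontier in `ℝ` is `{b}`; since `(0, ∞)` is open,
the frontier in the subspace is the trace of this one.
-/

open Set

theorem frontier_eq_singleton_of_Ioi_subset_of_subset_Ici {α : Type*} [TopologicalSpace α]
    [LinearOrder α] [OrderTopology α] [DenselyOrdered α] [NoMinOrder α] [NoMaxOrder α]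
    {s : Set α} {b : α} (hIoi : Ioi b ⊆ s) (hIci : s ⊆ Ici b) : frontier s = {b} := by
  have hclosure : closure s = Ici b :=
    (closure_minimal hIci isClosed_Ici).antisymm (closure_Ioi b ▸ closure_mono hIoi)
  have hinterior : interior s = Ioi b :=
    (interior_Ici (a := b) ▸ interior_mono hIci).antisymm (isOpen_Ioi.subset_interior_iff.mpr hIoi)
  rw [frontier, hclosure, hinterior, Ici_sdiff_Ioi, Icc_self]

section CondorBonus

variable {r q X₁ X₂ X₃ X₄ : ℝ} {f : ℝ → ℝ}

theorem condor_bonus_pos_of_X₂_lt (hr : 0 < r) (hq : 0 < q) (h12 : X₁ < X₂) (h34 : X₃ < X₄)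
    (hcase1 : 0 < -X₄ + X₃ + X₂ - X₁) (hcase2 : r * (X₃ + X₂ - X₁) ≥ q * X₄)
    (hs2 : ∀ S : ℝ, X₂ < S → S < X₃ → f S = r * (X₂ - X₁))
    (hb3 : X₂ < X₃ → f X₃ = (X₃ / 2) * (r - q) + r * (X₂ - X₁))
    (hs3 : ∀ S : ℝ, X₃ < S → S < X₄ → f S = r * (X₃ + X₂ - X₁) - q * S)
    (hb4 : f X₄ = r * (X₃ + X₂ - X₁) - (X₄ / 2) * (q + r))
    (hs4 : ∀ S : ℝ, X₄ < S → f S = r * (-X₄ + X₃ + X₂ - X₁)) {x : ℝ} (hx : X₂ < x) :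
    0 < f x := by
  rcases lt_trichotomy x X₃ with hx3 | rfl | hx3
  · rw [hs2 x hx hx3]; nlinarith
  · rw [hb3 hx]; nlinarith
  rcases lt_trichotomy x X₄ with hx4 | rfl | hx4
  · rw [hs3 x hx3 hx4]; nlinarith
  · rw [hb4]; nlinarith
  · rw [hs4 x hx4]; positivity

theorem condor_bonus_pos_iff_of_mem_ramp (hq : 0 < q)
    (hs1 : ∀ S : ℝ, X₁ < S → S < X₂ → f S = q * S - r * X₁) {x : ℝ} (hx1 : X₁ < x)
    (hx2 : x < X₂) : 0 < f x ↔ r / q * X₁ < x := by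
  rw [hs1 x hx1 hx2, sub_pos, div_mul_eq_mul_div, div_lt_iff₀ hq, mul_comm x]

theorem condor_bonus_X₂_pos (hr : 0 < r) (hq : 0 < q) (h12 : X₁ < X₂) (h23 : X₂ ≤ X₃)
    (hb2 : X₂ < X₃ → f X₂ = (X₂ / 2) * (q + r) - r * X₁)
    (hb23 : X₂ = X₃ → f X₂ = r * (X₂ - X₁)) (hc : r / q * X₁ < X₂) : 0 < f X₂ := by
  rw [div_mul_eq_mul_div, div_lt_iff₀ hq] at hc
  rcases h23.lt_or_eq with h | h
  · rw [hb2 h]; nlinarith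
  · rw [hb23 h]; nlinarith

theorem condor_bonus_nonpos_of_lt_threshold (hq : 0 < q) (h1 : 0 < X₁)
    (h0 : ∀ S : ℝ, S < X₁ → f S = 0) (hb1 : f X₁ = (X₁ / 2) * (q - r))
    (hs1 : ∀ S : ℝ, X₁ < S → S < X₂ → f S = q * S - r * X₁) {x : ℝ}
    (hx : x < min (max X₁ (r / q * X₁)) X₂) : f x ≤ 0 := by
  obtain ⟨hxmax, hx2⟩ := lt_min_iff.mp hx
  have hxc := lt_max_iff.mp hxmax
  rcases lt_trichotomy x X₁ with hx1 | rfl | hx1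
  · exact (h0 x hx1).le
  · have hqr : q ≤ r := by
      by_contra! h
      have : r / q < 1 := (div_lt_one hq).mpr h
      nlinarith [hxc.resolve_left (lt_irrefl x)]
    rw [hb1]
    exact mul_nonpos_of_nonneg_of_nonpos (by positivity) (by linarith)
  · exact not_lt.mp fun hpos ↦
      ((condor_bonus_pos_iff_of_mem_ramp hq hs1 hx1 hx2).mp hpos).not_gt
        (hxc.resolve_left hx1.not_gt)

end CondorBonus

/-- Condor spread, first case: if `−X₄+X₃+X₂−X₁ > 0` and `r(X₃+X₂−X₁) ≥ qX₄`, the boundary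
in `(0,∞)` of the positivity set of the bonus function is `{min(max(X₁,(r/q)X₁), X₂)}`. -/
theorem stmt_7 (r q X₁ X₂ X₃ X₄ : ℝ) (hr : 0 < r) (hq : 0 < q)
    (h1 : 0 < X₁) (h12 : X₁ < X₂) (h23 : X₂ ≤ X₃) (h34 : X₃ < X₄)
    (hcase1 : 0 < -X₄ + X₃ + X₂ - X₁) (hcase2 : r * (X₃ + X₂ - X₁) ≥ q * X₄)
    (f : ℝ → ℝ)
    (h0 : ∀ S : ℝ, S < X₁ → f S = 0)
    (hb1 : f X₁ = (X₁ / 2) * (q - r))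
    (hs1 : ∀ S : ℝ, X₁ < S → S < X₂ → f S = q * S - r * X₁)
    (hb2 : X₂ < X₃ → f X₂ = (X₂ / 2) * (q + r) - r * X₁)
    (hs2 : ∀ S : ℝ, X₂ < S → S < X₃ → f S = r * (X₂ - X₁))
    (hb23 : X₂ = X₃ → f X₂ = r * (X₂ - X₁))
    (hb3 : X₂ < X₃ → f X₃ = (X₃ / 2) * (r - q) + r * (X₂ - X₁))
    (hs3 : ∀ S : ℝ, X₃ < S → S < X₄ → f S = r * (X₃ + X₂ - X₁) - q * S)
    (hb4 : f X₄ = r * (X₃ + X₂ - X₁) - (X₄ / 2) * (q + r))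
    (hs4 : ∀ S : ℝ, X₄ < S → f S = r * (-X₄ + X₃ + X₂ - X₁)) :
    frontier {S : Set.Ioi (0 : ℝ) | 0 < f S} =
      {S : Set.Ioi (0 : ℝ) | (S : ℝ) = min (max X₁ (r / q * X₁)) X₂} := by
  have right : ∀ x, X₂ < x → 0 < f x := fun _ ↦
    condor_bonus_pos_of_X₂_lt hr hq h12 h34 hcase1 hcase2 hs2 hb3 hs3 hb4 hs4
  have hIoi : Ioi (min (max X₁ (r / q * X₁)) X₂) ⊆ {x | 0 < f x} := by
    intro x (hx : _ < x)
    rcases min_lt_iff.mp hx with hx | hx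
    · obtain ⟨hx1, hcx⟩ := max_lt_iff.mp hx
      rcases lt_trichotomy x X₂ with hx2 | rfl | hx2
      · exact (condor_bonus_pos_iff_of_mem_ramp hq hs1 hx1 hx2).mpr hcx
      · exact condor_bonus_X₂_pos hr hq h12 h23 hb2 hb23 hcx
      · exact right x hx2
    · exact right x hx
  have hIci : {x | 0 < f x} ⊆ Ici (min (max X₁ (r / q * X₁)) X₂) := fun x hx ↦
    not_lt.mp fun hlt ↦ (condor_bonus_nonpos_of_lt_threshold hq h1 h0 hb1 hs1 hlt).not_gt hx
  change frontier (Subtype.val ⁻¹' {x | 0 < f x}) = _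
  rw [← isOpen_Ioi.isOpenMap_subtype_val.preimage_frontier_eq_frontier_preimage
    continuous_subtype_val, frontier_eq_singleton_of_Ioi_subset_of_subset_Ici hIoi hIci]
  rfl
end

section
/- Let r > 0, q > 0 and 0 < X₁ < X₂ ≤ X₃ < X₄ with −X₄ + X₃ + X₂ − X₁ ≤ 0. With f the condor-spread bonus function (as defined piecewise: 0 on (0,X₁), qS − rX₁ on (X₁,X₂), r(X₂−X₁) on (X₂,X₃), r(X₃+X₂−X₁) − qS on (X₃,X₄), r(−X₄+X₃+X₂−X₁) on (X₄,∞), averaged values at breakpoints), the boundary of {S : f(S) > 0} in (0,∞) equals {min(max(X₁, (r/q)X₁), X₂), min(max(X₃, (r/q)(X₃+X₂−X₁)), X₄)}. -/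
set_option maxHeartbeats 1000000


/-- Condor spread, third case: if `−X₄+X₃+X₂−X₁ ≤ 0`, the boundary in `(0,∞)` of the
positivity set of the bonus function is
`{min(max(X₁,(r/q)X₁), X₂), min(max(X₃,(r/q)(X₃+X₂−X₁)), X₄)}`. -/
theorem stmt_8 (r q X₁ X₂ X₃ X₄ : ℝ) (hr : 0 < r) (hq : 0 < q)
    (h1 : 0 < X₁) (h12 : X₁ < X₂) (h23 : X₂ ≤ X₃) (h34 : X₃ < X₄)
    (hcase : -X₄ + X₃ + X₂ - X₁ ≤ 0)
    (f : ℝ → ℝ)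
    (h0 : ∀ S : ℝ, S < X₁ → f S = 0)
    (hb1 : f X₁ = (X₁ / 2) * (q - r))
    (hs1 : ∀ S : ℝ, X₁ < S → S < X₂ → f S = q * S - r * X₁)
    (hb2 : X₂ < X₃ → f X₂ = (X₂ / 2) * (q + r) - r * X₁)
    (hs2 : ∀ S : ℝ, X₂ < S → S < X₃ → f S = r * (X₂ - X₁))
    (hb23 : X₂ = X₃ → f X₂ = r * (X₂ - X₁))
    (hb3 : X₂ < X₃ → f X₃ = (X₃ / 2) * (r - q) + r * (X₂ - X₁))
    (hs3 : ∀ S : ℝ, X₃ < S → S < X₄ → f S = r * (X₃ + X₂ - X₁) - q * S)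
    (hb4 : f X₄ = r * (X₃ + X₂ - X₁) - (X₄ / 2) * (q + r))
    (hs4 : ∀ S : ℝ, X₄ < S → f S = r * (-X₄ + X₃ + X₂ - X₁)) :
    frontier {S : Set.Ioi (0 : ℝ) | 0 < f S} =
      {S : Set.Ioi (0 : ℝ) | (S : ℝ) = min (max X₁ (r / q * X₁)) X₂ ∨
        (S : ℝ) = min (max X₃ (r / q * (X₃ + X₂ - X₁))) X₄} := by
  have hdiv : ∀ c x : ℝ, r / q * c < x ↔ r * c < x * q := fun c x => by
    rw [div_mul_eq_mul_div, div_lt_iff₀ hq]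
  have hdiv' : ∀ c x : ℝ, x < r / q * c ↔ x * q < r * c := fun c x => by
    rw [div_mul_eq_mul_div, lt_div_iff₀ hq]
  have hdivle : ∀ c x : ℝ, r / q * c ≤ x ↔ r * c ≤ x * q := fun c x => by
    rw [div_mul_eq_mul_div, div_le_iff₀ hq]
  have hdivle' : ∀ c x : ℝ, x ≤ r / q * c ↔ x * q ≤ r * c := fun c x => by
    rw [div_mul_eq_mul_div, le_div_iff₀ hq]
  set a := min (max X₁ (r / q * X₁)) X₂ with ha
  set b := min (max X₃ (r / q * (X₃ + X₂ - X₁))) X₄ with hb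
  set A := {S : ℝ | 0 < f S} with hA
  have hX1a : X₁ ≤ a := le_min (le_max_left _ _) h12.le
  have haX2 : a ≤ X₂ := min_le_right _ _
  have hX3b : X₃ ≤ b := le_min (le_max_left _ _) h34.le
  have hbX4 : b ≤ X₄ := min_le_right _ _
  have ha0 : 0 < a := lt_of_lt_of_le h1 hX1a
  have hab : a < b := by
    by_cases hc : r * X₁ < q * X₂
    · have hm : max X₁ (r / q * X₁) < X₂ := by
        refine max_lt h12 ?_
        rw [hdiv]; linarith
      calc a ≤ max X₁ (r / q * X₁) := min_le_left _ _
        _ < X₂ := hm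
        _ ≤ X₃ := h23
        _ ≤ b := hX3b
    · push_neg at hc
      have hqltr : q < r := by nlinarith [mul_pos hr (by linarith : (0:ℝ) < X₂ - X₁)]
      have hu : X₂ < r / q * (X₃ + X₂ - X₁) := by
        rw [hdiv']; nlinarith
      calc a ≤ X₂ := haX2
        _ < b := lt_min (lt_of_lt_of_le hu (le_max_right _ _)) (by linarith)
  have hsub1 : Set.Ioo a b ⊆ A := by
    rintro S ⟨hS1, hS2⟩
    have hSX1 : X₁ < S := lt_of_le_of_lt hX1a hS1
    have hSX4 : S < X₄ := lt_of_lt_of_le hS2 hbX4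
    show 0 < f S
    rcases lt_trichotomy S X₂ with hc2 | hc2 | hc2
    · -- X₁ < S < X₂
      rw [hs1 S hSX1 hc2]
      have hm : max X₁ (r / q * X₁) < S := by
        rcases min_lt_iff.mp hS1 with h | h
        · exact h
        · linarith
      have : r / q * X₁ < S := lt_of_le_of_lt (le_max_right _ _) hm
      rw [hdiv] at this; linarith
    · subst hc2
      rcases eq_or_lt_of_le h23 with h23' | h23'
      · rw [hb23 h23']; nlinarith
      · rw [hb2 h23']
        have hm : max X₁ (r / q * X₁) < S := by
          rcases min_lt_iff.mp hS1 with h | h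
          · exact h
          · exact absurd h (lt_irrefl _)
        have h' : r / q * X₁ < S := lt_of_le_of_lt (le_max_right _ _) hm
        rw [hdiv] at h'; nlinarith
    · rcases lt_trichotomy S X₃ with hc3 | hc3 | hc3
      · rw [hs2 S hc2 hc3]; nlinarith
      · subst hc3
        have h23' : X₂ < S := hc2
        rw [hb3 h23']
        have hm : S < max S (r / q * (S + X₂ - X₁)) := by
          rcases lt_min_iff.mp hS2 with ⟨h, _⟩
          exact h
        have h' : S < r / q * (S + X₂ - X₁) := by
          rcases lt_max_iff.mp hm with h | h
          · exact absurd h (lt_irrefl _)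
          · exact h
        rw [hdiv'] at h'; nlinarith
      · rw [hs3 S hc3 hSX4]
        have hm : S < max X₃ (r / q * (X₃ + X₂ - X₁)) := (lt_min_iff.mp hS2).1
        have h' : S < r / q * (X₃ + X₂ - X₁) := by
          rcases lt_max_iff.mp hm with h | h
          · linarith
          · exact h
        rw [hdiv'] at h'; nlinarith
  have hsub2 : A ⊆ Set.Icc a b := by
    intro S hS
    have hS : 0 < f S := hS
    rcases lt_trichotomy S X₁ with hc1 | hc1 | hc1
    · rw [h0 S hc1] at hS; exact absurd hS (lt_irrefl _)
    · subst hc1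
      rw [hb1] at hS
      have hrq : r < q := by nlinarith
      have hm : max S (r / q * S) = S := max_eq_left (by rw [hdivle]; nlinarith)
      constructor
      · rw [ha, hm]; exact min_le_left _ _
      · linarith [hX3b]
    · rcases lt_trichotomy S X₂ with hc2 | hc2 | hc2
      · rw [hs1 S hc1 hc2] at hS
        constructor
        · refine le_of_lt (lt_of_le_of_lt (min_le_left _ _) (max_lt hc1 ?_))
          rw [hdiv]; nlinarith
        · linarith [hX3b]
      · subst hc2; exact ⟨haX2, le_trans h23 hX3b⟩
      · rcases lt_trichotomy S X₃ with hc3 | hc3 | hc3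
        · exact ⟨by linarith, by linarith [hX3b]⟩
        · subst hc3; exact ⟨by linarith, hX3b⟩
        · rcases lt_trichotomy S X₄ with hc4 | hc4 | hc4
          · rw [hs3 S hc3 hc4] at hS
            constructor
            · linarith
            · refine le_of_lt (lt_min (lt_of_lt_of_le ?_ (le_max_right _ _)) hc4)
              rw [hdiv']; nlinarith
          · subst hc4
            rw [hb4] at hS
            have hX40 : 0 < S := by linarith
            have hqr : q < r := by nlinarith
            constructor
            · linarith
            · refine le_min (le_trans ?_ (le_max_right _ _)) (le_refl _)
              rw [hdivle']; nlinarith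
          · rw [hs4 S hc4] at hS; nlinarith
  have hclos : closure A = Set.Icc a b := by
    apply subset_antisymm
    · exact closure_minimal hsub2 isClosed_Icc
    · rw [← closure_Ioo hab.ne]
      exact closure_mono hsub1
  have hint : interior A = Set.Ioo a b := by
    apply subset_antisymm
    · have := interior_mono hsub2
      rwa [interior_Icc] at this
    · exact interior_maximal hsub1 isOpen_Ioo
  have hfr : frontier A = {a, b} := by
    rw [frontier, hclos, hint, Set.Icc_diff_Ioo_same hab.le]
  have heq : {S : Set.Ioi (0 : ℝ) | 0 < f S} = Subtype.val ⁻¹' A := rfl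
  rw [heq, ← (isOpen_Ioi.isOpenMap_subtype_val).preimage_frontier_eq_frontier_preimage
    continuous_subtype_val A, hfr]
  ext x
  simp [Set.mem_preimage, Set.mem_insert_iff]
end

section
/- Let r > 0, q > 0, T > 0. Define f(S, A) = 0 for S < A, f = (A/2)(q − r) for S = A, and f(S, A) = −rA + qS − (1/T)·A·ln(A/S) for S > A, on the domain (0,∞)². Then the boundary of the set {(S,A) : f(S,A) > 0} equals {(S,A) ∈ (0,∞)² : S/A = max(1, G̃)}, where G̃ is the unique positive root of r − qG − (1/T)·ln G = 0. -/
/-!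
Write `x = S/A`. Since `f` is positively homogeneous, `f S A > 0` holds exactly when
`1 ≤ x` and `G̃ < x`: for `x > 1`, `f S A = -A (r - q x - (1/T) ln x)` and
`r - qx - (1/T) ln x` is strictly decreasing with root `G̃`; for `x = 1` the sign of `q - r`
is that of `G̃ < 1`. So the positivity set lies between `{x > max 1 G̃}` and `{x ≥ max 1 G̃}`.
The map `(S, A) ↦ ln (S/A)` is continuous and open on `(0,∞)²`, and preimages under such a
map commute with closure and interior, so the frontier of any set squeezed between the preimages
of `(a, ∞)` and `[a, ∞)` is the preimage of `{a}`.
-/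

open Set Real

theorem frontier_eq_preimage_singleton_of_subset_of_subset {X α : Type*} [TopologicalSpace X]
    [LinearOrder α] [TopologicalSpace α] [OrderTopology α] [DenselyOrdered α] [NoMinOrder α]
    [NoMaxOrder α] {ρ : X → α} (hρ : Continuous ρ) (hρo : IsOpenMap ρ) {W : Set X} {a : α}
    (hIoi : ρ ⁻¹' Ioi a ⊆ W) (hIci : W ⊆ ρ ⁻¹' Ici a) :
    frontier W = ρ ⁻¹' {a} := by
  have hclosure : closure W = ρ ⁻¹' Ici a := by
    refine (closure_minimal hIci (isClosed_Ici.preimage hρ)).antisymm ?_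
    rw [← closure_Ioi, hρo.preimage_closure_eq_closure_preimage hρ]
    exact closure_mono hIoi
  have hinterior : interior W = ρ ⁻¹' Ioi a := by
    refine (interior_maximal hIoi (isOpen_Ioi.preimage hρ)).antisymm' ?_
    rw [← interior_Ici, hρo.preimage_interior_eq_interior_preimage hρ]
    exact interior_mono hIci
  rw [frontier, hclosure, hinterior, ← preimage_sdiff, Ici_sdiff_Ioi, Icc_self]

noncomputable def logRatio (p : ↥(Ioi (0 : ℝ) ×ˢ Ioi (0 : ℝ))) : ℝ :=
  log ((p : ℝ × ℝ).1 / (p : ℝ × ℝ).2)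

theorem continuous_logRatio : Continuous logRatio :=
  continuousOn_log.comp_continuous
    ((continuous_fst.comp continuous_subtype_val).div (continuous_snd.comp continuous_subtype_val)
      fun p => p.2.2.ne')
    fun p => (div_pos p.2.1 p.2.2).ne'

theorem isOpenMap_logRatio : IsOpenMap logRatio := by
  refine IsOpenMap.of_sections fun p => ?_
  obtain ⟨⟨S, A⟩, hS, hA⟩ := p
  let g : ℝ → ↥(Ioi (0 : ℝ) ×ˢ Ioi (0 : ℝ)) := fun y =>
    ⟨(S * exp (y - log (S / A)), A), mul_pos hS (exp_pos _), hA⟩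
  refine ⟨g, (Continuous.subtype_mk (by fun_prop) _).continuousAt, ?_, fun y => ?_⟩
  · simp [g, logRatio]
  · simp only [g, logRatio]
    rw [mul_div_right_comm, log_mul (div_pos hS hA).ne' (exp_pos _).ne', log_exp]
    ring

theorem strictAntiOn_sub_mul_sub_mul_log (r : ℝ) {q c : ℝ} (hq : 0 < q) (hc : 0 ≤ c) :
    StrictAntiOn (fun x => r - q * x - c * log x) (Ioi 0) := by
  intro x hx y _ hxy
  have hlog := mul_le_mul_of_nonneg_left (log_le_log hx hxy.le) hc
  dsimp only
  nlinarith

theorem pos_iff_one_le_div_and_lt_div {r q T G : ℝ} (hq : 0 < q) (hT : 0 < T) (hG : 0 < G)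
    (hGroot : r - q * G - (1 / T) * log G = 0) {f : ℝ → ℝ → ℝ}
    (hlt : ∀ S A : ℝ, S < A → f S A = 0)
    (heq : ∀ A : ℝ, f A A = (A / 2) * (q - r))
    (hgt : ∀ S A : ℝ, A < S → f S A = -r * A + q * S - (1 / T) * A * log (A / S))
    {S A : ℝ} (hS : 0 < S) (hA : 0 < A) :
    0 < f S A ↔ 1 ≤ S / A ∧ G < S / A := by
  have hanti := strictAntiOn_sub_mul_sub_mul_log r hq (one_div_pos.2 hT).le
  have hlt_iff : ∀ x, 0 < x → (r - q * x - (1 / T) * log x < 0 ↔ G < x) := fun x hx => by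
    rw [← hGroot]; exact hanti.lt_iff_gt hx hG
  rcases lt_trichotomy S A with hSA | rfl | hAS
  · simp [hlt S A hSA, (div_lt_one hA).2 hSA]
  · rw [heq, div_self hA.ne', ← hlt_iff 1 one_pos, mul_pos_iff_of_pos_left (half_pos hA)]
    simp only [le_refl, true_and, log_one, mul_one, mul_zero, sub_zero, sub_pos, sub_neg]
  · have hf : f S A = A * -(r - q * (S / A) - (1 / T) * log (S / A)) := by
      rw [hgt S A hAS, log_div hA.ne' hS.ne', log_div hS.ne' hA.ne']
      field_simp
      ring
    rw [hf, mul_pos_iff_of_pos_left hA, neg_pos, hlt_iff _ (div_pos hS hA)]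
    simp [(one_lt_div hA).2 hAS |>.le]

theorem stmt_9_general (r q T : ℝ) (hq : 0 < q) (hT : 0 < T)
    (G : ℝ) (hG : 0 < G) (hGroot : r - q * G - (1 / T) * Real.log G = 0)
    (f : ℝ → ℝ → ℝ)
    (hlt : ∀ S A : ℝ, S < A → f S A = 0)
    (heq : ∀ A : ℝ, f A A = (A / 2) * (q - r))
    (hgt : ∀ S A : ℝ, A < S → f S A = -r * A + q * S - (1 / T) * A * Real.log (A / S)) :
    frontier {p : ↥(Set.Ioi (0 : ℝ) ×ˢ Set.Ioi (0 : ℝ)) | 0 < f (p : ℝ × ℝ).1 (p : ℝ × ℝ).2} =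
      {p : ↥(Set.Ioi (0 : ℝ) ×ˢ Set.Ioi (0 : ℝ)) |
        (p : ℝ × ℝ).1 / (p : ℝ × ℝ).2 = max 1 G} := by
  have hM : 0 < max 1 G := one_pos.trans_le (le_max_left 1 G)
  have hpos := fun {S A : ℝ} (hS : 0 < S) (hA : 0 < A) =>
    pos_iff_one_le_div_and_lt_div hq hT hG hGroot hlt heq hgt hS hA
  rw [frontier_eq_preimage_singleton_of_subset_of_subset continuous_logRatio isOpenMap_logRatio
    (a := log (max 1 G))]
  · ext ⟨⟨S, A⟩, hS, hA⟩
    exact log_injOn_pos.eq_iff (mem_Ioi.2 (div_pos hS hA)) (mem_Ioi.2 hM)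
  · rintro ⟨⟨S, A⟩, hS, hA⟩ h
    rw [mem_preimage, mem_Ioi, logRatio, log_lt_log_iff hM (div_pos hS hA), max_lt_iff] at h
    exact (hpos hS hA).2 ⟨h.1.le, h.2⟩
  · rintro ⟨⟨S, A⟩, hS, hA⟩ h
    rw [mem_preimage, mem_Ici, logRatio, log_le_log_iff hM (div_pos hS hA), max_le_iff]
    exact ⟨((hpos hS hA).1 h).1, ((hpos hS hA).1 h).2.le⟩

/-- Geometric-average Asian call: the boundary in `(0,∞)²` of the positivity set of the
bonus function is `{(S,A) : S/A = max(1, G̃)}`, `G̃` the unique positive root of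
`r − qG − (1/T)ln G = 0`. -/
theorem stmt_9 (r q T : ℝ) (hr : 0 < r) (hq : 0 < q) (hT : 0 < T)
    (G : ℝ) (hG : 0 < G) (hGroot : r - q * G - (1 / T) * Real.log G = 0)
    (f : ℝ → ℝ → ℝ)
    (hlt : ∀ S A : ℝ, S < A → f S A = 0)
    (heq : ∀ A : ℝ, f A A = (A / 2) * (q - r))
    (hgt : ∀ S A : ℝ, A < S → f S A = -r * A + q * S - (1 / T) * A * Real.log (A / S)) :
    frontier {p : ↥(Set.Ioi (0 : ℝ) ×ˢ Set.Ioi (0 : ℝ)) | 0 < f (p : ℝ × ℝ).1 (p : ℝ × ℝ).2} =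
      {p : ↥(Set.Ioi (0 : ℝ) ×ˢ Set.Ioi (0 : ℝ)) |
        (p : ℝ × ℝ).1 / (p : ℝ × ℝ).2 = max 1 G} :=
  stmt_9_general r q T hq hT G hG hGroot f hlt heq hgt
end

section
/- Let r > 0, q > 0, T > 0. Define f(S, A) = (q + 1/T)·S − (r + 1/T)·A for S > A, f = (A/2)(q − r) for S = A, and f = 0 for S < A, on (0,∞)². Then the boundary of {(S,A) : f(S,A) > 0} equals {(S,A) ∈ (0,∞)² : S/A = max(1, (r + 1/T)/(q + 1/T))}. -/
open Set

set_option maxHeartbeats 1000000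

/-- Arithmetic-average Asian call: the boundary in `(0,∞)²` of the positivity set of the
bonus function is `{(S,A) : S/A = max(1, (r+1/T)/(q+1/T))}`. -/
theorem stmt_10 (r q T : ℝ) (hr : 0 < r) (hq : 0 < q) (hT : 0 < T)
    (f : ℝ → ℝ → ℝ)
    (hlt : ∀ S A : ℝ, S < A → f S A = 0)
    (heq : ∀ A : ℝ, f A A = (A / 2) * (q - r))
    (hgt : ∀ S A : ℝ, A < S → f S A = (q + 1 / T) * S - (r + 1 / T) * A) :
    frontier {p : ↥(Set.Ioi (0 : ℝ) ×ˢ Set.Ioi (0 : ℝ)) | 0 < f (p : ℝ × ℝ).1 (p : ℝ × ℝ).2} =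
      {p : ↥(Set.Ioi (0 : ℝ) ×ˢ Set.Ioi (0 : ℝ)) |
        (p : ℝ × ℝ).1 / (p : ℝ × ℝ).2 = max 1 ((r + 1 / T) / (q + 1 / T))} := by
  have hT' : (0:ℝ) < 1 / T := by positivity
  set a : ℝ := q + 1 / T with ha
  set b : ℝ := r + 1 / T with hb
  have ha0 : 0 < a := by positivity
  have hb0 : 0 < b := by positivity
  set m : ℝ := max 1 (b / a) with hm
  have hm1 : (1:ℝ) ≤ m := le_max_left _ _
  -- the linear functional x ↦ x.1 - m * x.2
  set g : ℝ × ℝ →L[ℝ] ℝ :=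
    ContinuousLinearMap.fst ℝ ℝ ℝ - m • ContinuousLinearMap.snd ℝ ℝ ℝ with hgdef
  have hg : ∀ x : ℝ × ℝ, g x = x.1 - m * x.2 := fun x => rfl
  have hgsurj : Function.Surjective g := fun t => ⟨(t, 0), by simp [hg]⟩
  have hgopen : IsOpenMap g := g.isOpenMap hgsurj
  have hΩ : IsOpen (Set.Ioi (0:ℝ) ×ˢ Set.Ioi (0:ℝ)) := isOpen_Ioi.prod isOpen_Ioi
  -- the half-space whose preimage is the positivity set
  have key : ∃ H : Set ℝ, frontier H = {(0:ℝ)} ∧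
      {p : ↥(Set.Ioi (0 : ℝ) ×ˢ Set.Ioi (0 : ℝ)) | 0 < f (p : ℝ × ℝ).1 (p : ℝ × ℝ).2}
        = (fun p : ↥(Set.Ioi (0 : ℝ) ×ˢ Set.Ioi (0 : ℝ)) => g (p : ℝ × ℝ)) ⁻¹' H := by
    rcases lt_or_ge r q with hrq | hqr
    · -- q > r : m = 1, set is {A ≤ S}
      have hba : b < a := by rw [ha, hb]; linarith
      have hm' : m = 1 := by
        rw [hm, max_eq_left]
        exact (div_le_one ha0).2 hba.le
      refine ⟨Set.Ici 0, frontier_Ici, ?_⟩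
      ext ⟨⟨S, A⟩, hS, hA⟩
      simp only [Set.mem_setOf_eq, Set.mem_preimage, hg, hm', one_mul, Set.mem_Ici,
        sub_nonneg]
      simp only [Set.mem_Ioi] at hS hA
      rcases lt_trichotomy S A with h | h | h
      · rw [hlt S A h]; simp [h.not_ge, not_lt.2 h.le]
      · subst h
        rw [heq]
        have : 0 < (S / 2) * (q - r) := by
          have : 0 < q - r := by linarith
          positivity
        simp [this]
      · rw [hgt S A h]
        have h1 : a * A < a * S := mul_lt_mul_of_pos_left h ha0
        have h2 : b * A < a * A := mul_lt_mul_of_pos_right hba hA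
        have : 0 < a * S - b * A := by linarith
        simp [this, h.le]
    · -- q ≤ r : m = b/a, set is {m*A < S}
      have hab : a ≤ b := by rw [ha, hb]; linarith
      have hm' : m = b / a := by
        rw [hm, max_eq_right]
        rw [le_div_iff₀ ha0]; linarith
      refine ⟨Set.Ioi 0, frontier_Ioi, ?_⟩
      ext ⟨⟨S, A⟩, hS, hA⟩
      simp only [Set.mem_setOf_eq, Set.mem_preimage, hg, hm', Set.mem_Ioi, sub_pos]
      simp only [Set.mem_Ioi] at hS hA
      have hiff : b / a * A < S ↔ b * A < a * S := by
        rw [div_mul_eq_mul_div, div_lt_iff₀ ha0, mul_comm S a]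
      rw [hiff]
      rcases lt_trichotomy S A with h | h | h
      · rw [hlt S A h]
        constructor
        · intro h'; exact absurd h' (lt_irrefl 0)
        · intro h'
          have h1 : a * S < a * A := mul_lt_mul_of_pos_left h ha0
          have h2 : a * A ≤ b * A := mul_le_mul_of_nonneg_right hab hA.le
          exact absurd h' (by linarith)
      · subst h
        rw [heq]
        constructor
        · intro hpos
          have h1 : (S / 2) * (q - r) ≤ 0 :=
            mul_nonpos_of_nonneg_of_nonpos (by positivity) (by linarith)
          linarith
        · intro hlt'
          have h2 : a * S ≤ b * S := mul_le_mul_of_nonneg_right hab hS.le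
          linarith
      · rw [hgt S A h]
        constructor
        · intro hpos; linarith
        · intro hlt'; linarith
  obtain ⟨H, hHfr, hset⟩ := key
  have hcomp : (fun p : ↥(Set.Ioi (0 : ℝ) ×ˢ Set.Ioi (0 : ℝ)) => g (p : ℝ × ℝ))
      = g ∘ Subtype.val := rfl
  have hopen : IsOpenMap (fun p : ↥(Set.Ioi (0 : ℝ) ×ˢ Set.Ioi (0 : ℝ)) => g (p : ℝ × ℝ)) := by
    rw [hcomp]; exact hgopen.comp hΩ.isOpenMap_subtype_val
  have hcont : Continuous (fun p : ↥(Set.Ioi (0 : ℝ) ×ˢ Set.Ioi (0 : ℝ)) => g (p : ℝ × ℝ)) :=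
    g.continuous.comp continuous_subtype_val
  rw [hset, ← hopen.preimage_frontier_eq_frontier_preimage hcont, hHfr]
  ext ⟨⟨S, A⟩, hS, hA⟩
  simp only [Set.mem_preimage, Set.mem_singleton_iff, hg, Set.mem_setOf_eq, sub_eq_zero]
  simp only [Set.mem_Ioi] at hS hA
  rw [div_eq_iff hA.ne', eq_comm]
end
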